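/- Let d, D, n be positive integers and A₁,…,A_d be D×D complex matrices. Define the linear map Γ_n from D×D matrices to ℂ^{d^n} by (Γ_n(X))_{(i₁,…,i_n)} = tr(X A_{i₁}⋯A_{i_n}) for (i₁,…,i_n) ∈ {1,…,d}^n. Define the linear maps Φ(X) = ∑_{i=1}^d A_i X A_i† and Φ^∞(X) = tr(X)·𝟙/D on D×D matrices. Then for every D×D matrix X, | ‖Γ_n(X)‖² − (1/D)·‖X‖_F² | ≤ D · ‖Φ^n − Φ^∞‖_op · ‖X‖_F², where ‖Γ_n(X)‖ is the ℓ²-norm on ℂ^{d^n}, ‖·‖_F is the Frobenius norm, and ‖Φ^n − Φ^∞‖_op is the operator norm of the map Φ^n − Φ^∞ with respect to the Frobenius norm on D×D matrices. -/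

import Mathlib

open Matrix

/-- The Frobenius norm `(tr Mᴴ M)^(1/2)` of a complex square matrix. -/
noncomputable def frobNorm {n : Type*} [Fintype n] (M : Matrix n n ℂ) : ℝ :=
  Real.sqrt ((Mᴴ * M).trace.re)

/-- The operator norm of a map on `D × D` complex matrices with respect to the
Frobenius norm. -/
noncomputable def opNormF {D : ℕ}
    (T : Matrix (Fin D) (Fin D) ℂ → Matrix (Fin D) (Fin D) ℂ) : ℝ :=
  sSup {r : ℝ | ∃ X : Matrix (Fin D) (Fin D) ℂ, frobNorm X = 1 ∧ r = frobNorm (T X)}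

/-- The map sending a boundary condition `X` to the MPS vector of `n` sites:
`(Γ_n X)_{(i₁,…,i_n)} = tr (X A_{i₁} ⋯ A_{i_n})`. -/
noncomputable def Gamma (d D n : ℕ) (A : Fin d → Matrix (Fin D) (Fin D) ℂ)
    (X : Matrix (Fin D) (Fin D) ℂ) : (Fin n → Fin d) → ℂ :=
  fun i => (X * (List.ofFn fun t => A (i t)).prod).trace

/-!
Write `Γ_n(X)_w = tr (X P_w)` with `P_w = A_{w₁} ⋯ A_{w_n}`. Then `∑_w |tr (X P_w)|²` is the
quadratic form, evaluated at `vec X`, of the Choi matrix of `Z ↦ ∑_w P_w Z P_wᴴ = Φⁿ(Z)`.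
The Choi matrix of `Φ^∞` is `𝟙 / D`, whose quadratic form is `‖X‖_F² / D`, so the difference
is the quadratic form of the Choi matrix of `Φⁿ - Φ^∞`. By Cauchy–Schwarz this is at most the
Frobenius norm of that Choi matrix times `‖X‖_F²`, and that Frobenius norm is
`(∑_{a,c} ‖(Φⁿ - Φ^∞)(E_ac)‖_F²)^{1/2} ≤ D ‖Φⁿ - Φ^∞‖_op`.
-/

section Frobenius

variable {m : Type*} [Fintype m]

lemma frobNorm_nonneg (M : Matrix m m ℂ) : 0 ≤ frobNorm M :=
  Real.sqrt_nonneg _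

lemma frobNorm_sq (M : Matrix m m ℂ) : frobNorm M ^ 2 = ∑ i, ∑ j, ‖M i j‖ ^ 2 := by
  have h : (Mᴴ * M).trace = ((∑ i, ∑ j, ‖M i j‖ ^ 2 : ℝ) : ℂ) := by
    rw [← star_vec_dotProduct_vec, dotProduct, Fintype.sum_prod_type, Finset.sum_comm]
    simp [Complex.conj_mul']
  rw [frobNorm, h, Complex.ofReal_re, Real.sq_sqrt (by positivity)]

lemma sum_norm_vec_sq (X : Matrix m m ℂ) : ∑ p, ‖vec X p‖ ^ 2 = frobNorm X ^ 2 := by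
  rw [frobNorm_sq, Fintype.sum_prod_type, Finset.sum_comm]
  rfl

lemma frobNorm_single_one [DecidableEq m] (a c : m) : frobNorm (single a c (1 : ℂ)) = 1 := by
  rw [← pow_eq_one_iff_of_nonneg (frobNorm_nonneg _) two_ne_zero, frobNorm_sq]
  simp [single_apply, ite_and, apply_ite]

lemma exists_frobNorm_apply_le (T : Matrix m m ℂ →ₗ[ℂ] Matrix m m ℂ) :
    ∃ C, ∀ Y, frobNorm (T Y) ≤ C * frobNorm Y := by
  let e : Matrix m m ℂ ≃ₗ[ℂ] EuclideanSpace ℂ (m × m) :=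
    (LinearEquiv.curry ℂ ℂ m m).symm.trans (WithLp.linearEquiv 2 ℂ _).symm
  have he : ∀ M, frobNorm M = ‖e M‖ := fun M => by
    rw [EuclideanSpace.norm_eq, Fintype.sum_prod_type, ← Real.sqrt_sq (frobNorm_nonneg M),
      frobNorm_sq]
    rfl
  let T' := LinearMap.toContinuousLinearMap (e.conj T)
  refine ⟨‖T'‖, fun Y => ?_⟩
  simpa [he, T'] using T'.le_opNorm (e Y)

end Frobenius

section OperatorNorm

variable {D : ℕ}

lemma opNormF_nonneg (T : Matrix (Fin D) (Fin D) ℂ → Matrix (Fin D) (Fin D) ℂ) :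
    0 ≤ opNormF T :=
  Real.sSup_nonneg (by rintro _ ⟨X, -, rfl⟩; exact frobNorm_nonneg _)

lemma frobNorm_apply_le_opNormF (T : Matrix (Fin D) (Fin D) ℂ →ₗ[ℂ] Matrix (Fin D) (Fin D) ℂ)
    {Y : Matrix (Fin D) (Fin D) ℂ} (hY : frobNorm Y = 1) : frobNorm (T Y) ≤ opNormF T := by
  obtain ⟨C, hC⟩ := exists_frobNorm_apply_le T
  refine le_csSup ⟨C, ?_⟩ ⟨Y, hY, rfl⟩
  rintro _ ⟨X, hX, rfl⟩
  simpa [hX] using hC X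

end OperatorNorm

section Channel

variable {m ι : Type*} [Fintype m] [Fintype ι]

def krausMap (A : ι → Matrix m m ℂ) : Matrix m m ℂ →ₗ[ℂ] Matrix m m ℂ :=
  ∑ i, LinearMap.mulLeftRight ℂ (A i, (A i)ᴴ)

lemma coe_krausMap (A : ι → Matrix m m ℂ) :
    ⇑(krausMap A) = fun Z => ∑ i, A i * Z * (A i)ᴴ := by
  ext1 Z
  simp [krausMap, LinearMap.mulLeftRight_apply]

lemma iterate_kraus_eq_sum_words [DecidableEq m] (A : ι → Matrix m m ℂ) (n : ℕ)
    (Z : Matrix m m ℂ) :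
    (fun Z => ∑ i, A i * Z * (A i)ᴴ)^[n] Z =
      ∑ w : Fin n → ι,
        (List.ofFn fun t => A (w t)).prod * Z * ((List.ofFn fun t => A (w t)).prod)ᴴ := by
  induction n with
  | zero => simp
  | succ n ih =>
    rw [Function.iterate_succ_apply', ih, ← (Fin.consEquiv fun _ => ι).sum_comp,
      Fintype.sum_prod_type]
    simp only [Fin.consEquiv_apply, List.ofFn_succ, Fin.cons_zero, Fin.cons_succ, List.prod_cons,
      conjTranspose_mul, Finset.mul_sum, Finset.sum_mul, Matrix.mul_assoc]

variable (m) in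
noncomputable def traceProjection [DecidableEq m] : Matrix m m ℂ →ₗ[ℂ] Matrix m m ℂ :=
  (traceLinearMap m ℂ ℂ).smulRight ((Fintype.card m : ℂ)⁻¹ • 1)

lemma traceProjection_apply [DecidableEq m] (Y : Matrix m m ℂ) :
    traceProjection m Y = (Y.trace / Fintype.card m) • 1 := by
  simp [traceProjection, smul_smul, div_eq_mul_inv]

end Channel

section Choi

variable {m ι : Type*} [DecidableEq m]

/-- The Choi matrix `∑_{a,c} T(E_ac) ⊗ E_ac`, indexed so that its quadratic form is read off
at Mathlib's column-stacking `vec`: the entry at `((b, a), (e, c))` is `T(E_ac)_{be}`. -/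
def choi (T : Matrix m m ℂ → Matrix m m ℂ) : Matrix (m × m) (m × m) ℂ :=
  of fun p q => T (single p.2 q.2 1) p.1 q.1

lemma choi_sub (T S : Matrix m m ℂ →ₗ[ℂ] Matrix m m ℂ) : choi ⇑(T - S) = choi T - choi S :=
  rfl

lemma choi_sum [Fintype ι] (T : ι → Matrix m m ℂ → Matrix m m ℂ) :
    choi (fun Z => ∑ i, T i Z) = ∑ i, choi (T i) := by
  ext p q
  simp [choi, Matrix.sum_apply]

variable [Fintype m]

lemma choi_conj (P : Matrix m m ℂ) :
    choi (fun Z => P * Z * Pᴴ) = vecMulVec (vec Pᵀ) (star (vec Pᵀ)) := by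
  ext p q
  simp [choi, vecMulVec_apply, mul_apply, single_apply, ite_and]

lemma choi_traceProjection : choi ⇑(traceProjection m) = (Fintype.card m : ℂ)⁻¹ • 1 := by
  ext p q
  obtain h | h := eq_or_ne p.2 q.2
  · simp [choi, traceProjection_apply, one_apply, Prod.ext_iff, h, div_eq_inv_mul]
  · simp [choi, traceProjection_apply, one_apply, Prod.ext_iff, h, trace_single_eq_of_ne]

lemma choi_pow_krausMap [Fintype ι] (A : ι → Matrix m m ℂ) (n : ℕ) :
    choi ⇑(krausMap A ^ n) = choi fun Z => ∑ w : Fin n → ι,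
        (List.ofFn fun t => A (w t)).prod * Z * ((List.ofFn fun t => A (w t)).prod)ᴴ := by
  rw [Module.End.coe_pow, coe_krausMap]
  exact congrArg choi (funext (iterate_kraus_eq_sum_words A n))

lemma frobNorm_choi_sq (T : Matrix m m ℂ → Matrix m m ℂ) :
    frobNorm (choi T) ^ 2 = ∑ a, ∑ c, frobNorm (T (single a c 1)) ^ 2 := by
  simp only [frobNorm_sq, choi, of_apply, Fintype.sum_prod_type]
  rw [Finset.sum_comm]
  exact Finset.sum_congr rfl fun a _ =>
    (Finset.sum_congr rfl fun _ _ => Finset.sum_comm).trans Finset.sum_comm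

lemma frobNorm_choi_le {T : Matrix m m ℂ → Matrix m m ℂ} {K : ℝ} (hK : 0 ≤ K)
    (hT : ∀ a c, frobNorm (T (single a c 1)) ≤ K) :
    frobNorm (choi T) ≤ Fintype.card m * K := by
  refine le_of_pow_le_pow_left₀ two_ne_zero (by positivity) ?_
  calc frobNorm (choi T) ^ 2 = ∑ a, ∑ c, frobNorm (T (single a c 1)) ^ 2 := frobNorm_choi_sq T
    _ ≤ ∑ a : m, ∑ c : m, K ^ 2 := by
        gcongr with a _ c _
        exacts [frobNorm_nonneg _, hT a c]
    _ = (Fintype.card m * K) ^ 2 := by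
        simp only [Finset.sum_const, Finset.card_univ, nsmul_eq_mul]
        ring

end Choi

section QuadraticForm

variable {ι : Type*} [Fintype ι]

lemma dotProduct_star_self_eq_sum_norm_sq (v : ι → ℂ) :
    v ⬝ᵥ star v = ((∑ p, ‖v p‖ ^ 2 : ℝ) : ℂ) := by
  simp [dotProduct, Complex.mul_conj']

lemma norm_dotProduct_sq (u x : ι → ℂ) :
    ((‖u ⬝ᵥ x‖ ^ 2 : ℝ) : ℂ) = u ⬝ᵥ (vecMulVec x (star x) *ᵥ star u) := by
  rw [vecMulVec_mulVec, op_smul_eq_smul, dotProduct_smul, star_dotProduct_star, smul_eq_mul,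
    mul_comm, Complex.star_def, Complex.mul_conj']
  push_cast
  rfl

lemma norm_dotProduct_mulVec_star_le (C : Matrix ι ι ℂ) (v : ι → ℂ) :
    ‖v ⬝ᵥ (C *ᵥ star v)‖ ≤ frobNorm C * ∑ p, ‖v p‖ ^ 2 := by
  have hsum : v ⬝ᵥ (C *ᵥ star v) = ∑ pq : ι × ι, C pq.1 pq.2 * (v pq.1 * star (v pq.2)) := by
    simp only [dotProduct, mulVec, Finset.mul_sum, Fintype.sum_prod_type, Pi.star_apply]
    exact Finset.sum_congr rfl fun _ _ => Finset.sum_congr rfl fun _ _ => by ring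
  calc ‖v ⬝ᵥ (C *ᵥ star v)‖
      ≤ ∑ pq : ι × ι, ‖C pq.1 pq.2‖ * (‖v pq.1‖ * ‖v pq.2‖) := by
        rw [hsum]
        refine (norm_sum_le _ _).trans_eq (Finset.sum_congr rfl fun _ _ => ?_)
        simp
    _ ≤ √(∑ pq : ι × ι, ‖C pq.1 pq.2‖ ^ 2) * √(∑ pq : ι × ι, (‖v pq.1‖ * ‖v pq.2‖) ^ 2) :=
        Real.sum_mul_le_sqrt_mul_sqrt _ _ _
    _ = frobNorm C * ∑ p, ‖v p‖ ^ 2 := by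
        simp only [mul_pow, Fintype.sum_prod_type, ← Finset.sum_mul_sum, ← frobNorm_sq]
        rw [Real.sqrt_sq (frobNorm_nonneg C), Real.sqrt_mul_self (by positivity)]

end QuadraticForm

section BoundaryMap

variable {m ι : Type*} [Fintype m]

lemma trace_mul_eq_vec_dotProduct (X P : Matrix m m ℂ) : (X * P).trace = vec X ⬝ᵥ vec Pᵀ := by
  rw [vec_dotProduct_vec, ← transpose_mul, trace_transpose, trace_mul_comm]

variable [DecidableEq m]

lemma sum_norm_trace_mul_sq [Fintype ι] (X : Matrix m m ℂ) (P : ι → Matrix m m ℂ) :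
    ((∑ w, ‖(X * P w).trace‖ ^ 2 : ℝ) : ℂ) =
      vec X ⬝ᵥ (choi (fun Z => ∑ w, P w * Z * (P w)ᴴ) *ᵥ star (vec X)) := by
  simp only [Complex.ofReal_sum, trace_mul_eq_vec_dotProduct, norm_dotProduct_sq, choi_sum,
    choi_conj, Matrix.sum_mulVec, dotProduct_sum]

lemma sum_norm_Gamma_sq {d D : ℕ} (n : ℕ) (A : Fin d → Matrix (Fin D) (Fin D) ℂ)
    (X : Matrix (Fin D) (Fin D) ℂ) :
    ((∑ i, ‖Gamma d D n A X i‖ ^ 2 : ℝ) : ℂ) =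
      vec X ⬝ᵥ (choi ⇑(krausMap A ^ n) *ᵥ star (vec X)) := by
  rw [choi_pow_krausMap]
  exact sum_norm_trace_mul_sq X _

lemma vec_dotProduct_choi_traceProjection_mulVec (X : Matrix m m ℂ) :
    vec X ⬝ᵥ (choi ⇑(traceProjection m) *ᵥ star (vec X)) =
      ((1 / Fintype.card m * frobNorm X ^ 2 : ℝ) : ℂ) := by
  rw [choi_traceProjection, smul_mulVec, one_mulVec, dotProduct_smul,
    dotProduct_star_self_eq_sum_norm_sq, sum_norm_vec_sq]
  push_cast
  ring

end BoundaryMap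

theorem quantum_expander_quasi_isometry_general
    (d D n : ℕ)
    (A : Fin d → Matrix (Fin D) (Fin D) ℂ)
    (X : Matrix (Fin D) (Fin D) ℂ) :
    |(∑ i : Fin n → Fin d, ‖Gamma d D n A X i‖ ^ 2) -
        (1 / (D : ℝ)) * frobNorm X ^ 2| ≤
      (D : ℝ) *
        opNormF (fun Y =>
          (fun Z => ∑ i, A i * Z * (A i)ᴴ)^[n] Y -
            (Y.trace / (D : ℂ)) • (1 : Matrix (Fin D) (Fin D) ℂ)) *
        frobNorm X ^ 2 := by
  set T := krausMap A ^ n - traceProjection (Fin D)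
  have hT : (fun Y => (fun Z => ∑ i, A i * Z * (A i)ᴴ)^[n] Y -
      (Y.trace / (D : ℂ)) • (1 : Matrix (Fin D) (Fin D) ℂ)) = ⇑T := by
    ext1 Y
    simp [T, Module.End.coe_pow, coe_krausMap, traceProjection_apply]
  have hquad : ((∑ i, ‖Gamma d D n A X i‖ ^ 2 - 1 / (D : ℝ) * frobNorm X ^ 2 : ℝ) : ℂ) =
      vec X ⬝ᵥ (choi T *ᵥ star (vec X)) := by
    rw [choi_sub, sub_mulVec, dotProduct_sub, ← sum_norm_Gamma_sq,
      vec_dotProduct_choi_traceProjection_mulVec, Fintype.card_fin, Complex.ofReal_sub]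
  rw [hT, ← Real.norm_eq_abs, ← Complex.norm_real, hquad]
  calc ‖vec X ⬝ᵥ (choi T *ᵥ star (vec X))‖ ≤ frobNorm (choi T) * frobNorm X ^ 2 := by
        simpa only [sum_norm_vec_sq] using norm_dotProduct_mulVec_star_le (choi T) (vec X)
    _ ≤ D * opNormF T * frobNorm X ^ 2 := by
        gcongr
        simpa using frobNorm_choi_le (opNormF_nonneg T)
          fun a c => frobNorm_apply_le_opNormF T (frobNorm_single_one a c)

/-- `| ‖Γ_n(X)‖² − ‖X‖_F²/D | ≤ D ‖Φ^n − Φ^∞‖_op ‖X‖_F²`, where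
`Φ(X) = ∑ i, A i X (A i)ᴴ` and `Φ^∞(X) = tr(X) 𝟙 / D`. -/
theorem quantum_expander_quasi_isometry
    (d D n : ℕ) (hd : 0 < d) (hD : 0 < D) (hn : 0 < n)
    (A : Fin d → Matrix (Fin D) (Fin D) ℂ)
    (X : Matrix (Fin D) (Fin D) ℂ) :
    |(∑ i : Fin n → Fin d, ‖Gamma d D n A X i‖ ^ 2) -
        (1 / (D : ℝ)) * frobNorm X ^ 2| ≤
      (D : ℝ) *
        opNormF (fun Y =>
          (fun Z => ∑ i, A i * Z * (A i)ᴴ)^[n] Y -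
            (Y.trace / (D : ℂ)) • (1 : Matrix (Fin D) (Fin D) ℂ)) *
        frobNorm X ^ 2 :=
  quantum_expander_quasi_isometry_general d D n A X
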